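/- arXiv:2311.13765 — 3 statements merged into one kernel-verified Lean document; each statement's English description precedes it below -/
import Mathlib

section
/- Any optimal solution mu* of the dual problem min over mu >= 0 of E[max_{t in T}(m^t(X) - mu^t)] + sum_t mu^t b^t must lie in the box [0, C]^{m+1}, where C is a uniform bound on |m^t(x)|, provided m^t is nonnegative, b^t > 0 for all t, treatment 0 satisfies b^0 = 1 and one may take mu^0 = 0. -/
open MeasureTheory

theorem stmt4 {𝒳 : Type*} [MeasurableSpace 𝒳] (P : Measure 𝒳) [IsProbabilityMeasure P]
    {m : ℕ} (mt : Fin (m + 1) → 𝒳 → ℝ) (b : Fin (m + 1) → ℝ) (C : ℝ)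
    (hnn : ∀ t x, 0 ≤ mt t x) (hbdd : ∀ t x, |mt t x| ≤ C)
    (hb : ∀ t, 0 < b t ∧ b t ≤ 1) (hb0 : b 0 = 1)
    (μstar : Fin (m + 1) → ℝ) (hμ0 : μstar 0 = 0) (hμnn : ∀ t, 0 ≤ μstar t)
    (hopt : ∀ μ : Fin (m + 1) → ℝ, (∀ t, 0 ≤ μ t) → μ 0 = 0 →
      (∫ x, Finset.univ.sup' Finset.univ_nonempty (fun t => mt t x - μstar t) ∂P)
          + ∑ t, μstar t * b t
        ≤ (∫ x, Finset.univ.sup' Finset.univ_nonempty (fun t => mt t x - μ t) ∂P)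
          + ∑ t, μ t * b t) :
    ∀ t, μstar t ≤ C := by
  have hX : Nonempty 𝒳 := by
    by_contra h
    have h1 : (P Set.univ) = 1 := measure_univ
    rw [Set.univ_eq_empty_iff.mpr (not_nonempty_iff.mp h), measure_empty] at h1
    exact zero_ne_one h1
  obtain ⟨x0⟩ := hX
  have hC : (0 : ℝ) ≤ C := le_trans (abs_nonneg _) (hbdd 0 x0)
  intro s
  by_contra hs
  push_neg at hs
  set μ : Fin (m + 1) → ℝ := fun t => min (μstar t) C with hμdef
  have hμnn' : ∀ t, 0 ≤ μ t := fun t => le_min (hμnn t) hC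
  have hμ0' : μ 0 = 0 := by simp [hμdef, hμ0, hC]
  have hsup : ∀ x, (Finset.univ.sup' Finset.univ_nonempty (fun t => mt t x - μstar t))
      = Finset.univ.sup' Finset.univ_nonempty (fun t => mt t x - μ t) := by
    intro x
    apply le_antisymm
    · apply Finset.sup'_le
      intro t _
      exact Finset.le_sup'_of_le (fun t => mt t x - μ t) (Finset.mem_univ t)
        (by simp only [hμdef]; linarith [min_le_left (μstar t) C])
    · apply Finset.sup'_le
      intro t _
      rcases le_or_gt (μstar t) C with h | h
      · have : μ t = μstar t := min_eq_left h
        rw [this]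
        exact Finset.le_sup' (fun t => mt t x - μstar t) (Finset.mem_univ t)
      · have hμt : μ t = C := min_eq_right h.le
        have h1 : mt t x - μ t ≤ 0 := by
          rw [hμt]
          linarith [le_trans (le_abs_self _) (hbdd t x)]
        have h2 : (0 : ℝ) ≤ mt 0 x - μstar 0 := by rw [hμ0]; simpa using hnn 0 x
        calc mt t x - μ t ≤ mt 0 x - μstar 0 := le_trans h1 h2
          _ ≤ _ := Finset.le_sup' (fun t => mt t x - μstar t) (Finset.mem_univ (0 : Fin (m+1)))
  have hint : (∫ x, Finset.univ.sup' Finset.univ_nonempty (fun t => mt t x - μstar t) ∂P)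
      = ∫ x, Finset.univ.sup' Finset.univ_nonempty (fun t => mt t x - μ t) ∂P := by
    exact congrArg _ (funext hsup)
  have hle := hopt μ hμnn' hμ0'
  rw [hint] at hle
  have hsum : (∑ t, μstar t * b t) ≤ ∑ t, μ t * b t := by linarith
  have hlt : (∑ t, μ t * b t) < ∑ t, μstar t * b t := by
    apply Finset.sum_lt_sum
    · intro i _
      exact mul_le_mul_of_nonneg_right (min_le_left _ _) (hb i).1.le
    · refine ⟨s, Finset.mem_univ s, ?_⟩
      have : μ s = C := min_eq_right hs.le
      rw [this]
      exact mul_lt_mul_of_pos_right hs (hb s).1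
  linarith
end

section
/- Given KKT conditions for the dual problem: stationarity P(m^t(X) - mu*^t >= max_{t' != t}(m^{t'}(X) - mu*^{t'})) + lambda*^t = b^t, complementary slackness lambda*^t mu*^t = 0, and nonnegativity mu*, lambda* >= 0, the deterministic policy pi* assigning each x the treatment argmax_t (m^t(x) - mu*^t) (with lexicographic tie-breaking) satisfies the capacity constraints E[pi*^t(X)] <= b^t for all t. -/
open MeasureTheory

open Classical in
noncomputable def lexArgmax {ι : Type*} [Fintype ι] [LinearOrder ι] [Nonempty ι] (f : ι → ℝ) : ι :=
  (Finset.univ.filter (fun t => ∀ t', f t' ≤ f t)).min' (by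
    obtain ⟨t, -, ht⟩ := Finset.exists_max_image Finset.univ f Finset.univ_nonempty
    exact ⟨t, Finset.mem_filter.mpr ⟨Finset.mem_univ t, fun t' => ht t' (Finset.mem_univ t')⟩⟩)

/-! The policy only ever picks a treatment `t` at points of the region where `t` attains the
maximum of `m^{t'} - μ*^{t'}`, and stationarity with `λ* ≥ 0` says this region has probability
`b^t - λ*^t ≤ b^t`. -/

section MaximizerRegion

variable {ι 𝒳 : Type*}

def maximizerRegion (g : ι → 𝒳 → ℝ) (t : ι) : Set 𝒳 :=
  {x | ∀ t', t' ≠ t → g t' x ≤ g t x}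

theorem measurableSet_maximizerRegion [MeasurableSpace 𝒳] [Countable ι] {g : ι → 𝒳 → ℝ}
    (hg : ∀ t, Measurable (g t)) (t : ι) : MeasurableSet (maximizerRegion g t) := by
  have hInter : maximizerRegion g t = ⋂ t' ∈ {t' | t' ≠ t}, {x | g t' x ≤ g t x} := by
    ext x
    simp [maximizerRegion]
  rw [hInter]
  exact MeasurableSet.biInter (Set.to_countable _) fun t' _ => measurableSet_le (hg t') (hg t)

variable [Fintype ι] [LinearOrder ι] [Nonempty ι]

theorem apply_le_apply_lexArgmax (f : ι → ℝ) (t' : ι) : f t' ≤ f (lexArgmax f) := by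
  classical
  have hmem : lexArgmax f ∈ Finset.univ.filter (fun t => ∀ t', f t' ≤ f t) :=
    Finset.min'_mem _ _
  exact (Finset.mem_filter.mp hmem).2 t'

theorem ite_lexArgmax_le_indicator_maximizerRegion (g : ι → 𝒳 → ℝ) (t : ι) (x : 𝒳) :
    (if lexArgmax (fun t' => g t' x) = t then (1 : ℝ) else 0)
      ≤ (maximizerRegion g t).indicator 1 x := by
  split_ifs with h
  · have hx : x ∈ maximizerRegion g t := fun t' _ =>
      h ▸ apply_le_apply_lexArgmax (fun t' => g t' x) t'
    simp [hx]
  · exact Set.indicator_nonneg (fun _ _ => zero_le_one) x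

theorem integral_ite_lexArgmax_le_measureReal [MeasurableSpace 𝒳] (P : Measure 𝒳)
    [IsFiniteMeasure P] {g : ι → 𝒳 → ℝ} (hg : ∀ t, Measurable (g t)) (t : ι) :
    ∫ x, (if lexArgmax (fun t' => g t' x) = t then (1 : ℝ) else 0) ∂P
      ≤ P.real (maximizerRegion g t) := by
  have hS := measurableSet_maximizerRegion hg t
  calc ∫ x, (if lexArgmax (fun t' => g t' x) = t then (1 : ℝ) else 0) ∂P
      ≤ ∫ x, (maximizerRegion g t).indicator 1 x ∂P :=
        -- monotonicity from a nonnegative function: the policy need not be shown measurable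
        integral_mono_of_nonneg
          (Filter.Eventually.of_forall fun x => by dsimp only; split_ifs <;> simp)
          ((integrable_const (1 : ℝ)).indicator hS)
          (Filter.Eventually.of_forall (ite_lexArgmax_le_indicator_maximizerRegion g t))
    _ = P.real (maximizerRegion g t) := integral_indicator_one hS

end MaximizerRegion

theorem stmt6_general {𝒳 : Type*} [MeasurableSpace 𝒳] (P : Measure 𝒳) [IsProbabilityMeasure P]
    {m : ℕ} (mt : Fin (m + 1) → 𝒳 → ℝ) (b : Fin (m + 1) → ℝ)
    (hmeas : ∀ t, Measurable (mt t))
    (μstar lamstar : Fin (m + 1) → ℝ)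
    (hlamnn : ∀ t, 0 ≤ lamstar t)
    (hstat : ∀ t, (P {x | ∀ t', t' ≠ t → mt t' x - μstar t' ≤ mt t x - μstar t}).toReal
        + lamstar t = b t) :
    ∀ t, (∫ x, (if lexArgmax (fun t' => mt t' x - μstar t') = t then (1 : ℝ) else 0) ∂P)
      ≤ b t := by
  intro t
  have hpolicy := integral_ite_lexArgmax_le_measureReal P
    (g := fun t' x => mt t' x - μstar t') (fun t' => (hmeas t').sub_const _) t
  have hregion : P.real (maximizerRegion (fun t' x => mt t' x - μstar t') t) + lamstar t = b t :=
    hstat t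
  linarith [hlamnn t]

theorem stmt6 {𝒳 : Type*} [MeasurableSpace 𝒳] (P : Measure 𝒳) [IsProbabilityMeasure P]
    {m : ℕ} (mt : Fin (m + 1) → 𝒳 → ℝ) (b : Fin (m + 1) → ℝ) (hb : ∀ t, 0 < b t ∧ b t ≤ 1)
    (C : ℝ) (hbdd : ∀ t x, |mt t x| ≤ C)
    (hmeas : ∀ t, Measurable (mt t))
    (hatomless : ∀ t t' : Fin (m + 1), t ≠ t' → ∀ z : ℝ, P {x | mt t x - mt t' x = z} = 0)
    (μstar lamstar : Fin (m + 1) → ℝ)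
    (hμnn : ∀ t, 0 ≤ μstar t) (hlamnn : ∀ t, 0 ≤ lamstar t)
    (hstat : ∀ t, (P {x | ∀ t', t' ≠ t → mt t' x - μstar t' ≤ mt t x - μstar t}).toReal
        + lamstar t = b t)
    (hcs : ∀ t, lamstar t * μstar t = 0) :
    ∀ t, (∫ x, (if lexArgmax (fun t' => mt t' x - μstar t') = t then (1 : ℝ) else 0) ∂P)
      ≤ b t :=
  stmt6_general P mt b hmeas μstar lamstar hlamnn hstat
end

section
/- Under the KKT conditions and almost-sure uniqueness of the argmax (which holds when pairwise differences of m^t(X) are continuously distributed), the expected outcome of the policy pi* equals the dual optimal value: E[sum_t pi*^t(X) m^t(X)] = E[max_t (m^t(X) - mu*^t)] + sum_t mu*^t b^t. -/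
/-!
Write `T x` for the lexicographic argmax of `t ↦ m^t(x) - μ*^t`. Pointwise, the policy earns
`m^{T x}(x) = max_t (m^t(x) - μ*^t) + μ*^{T x}`, so it remains to show `E[μ*^T] = Σ_t μ*^t b^t`.
Since ties have probability zero, `{T = t}` agrees a.e. with the event that `t` attains the
maximum, whose probability is `b^t - λ*^t` by stationarity; complementary slackness then removes
the `λ*^t μ*^t` terms.
-/

open MeasureTheory

theorem measurableSet_setOf_forall_le {ι : Type*} [Countable ι] (s : ι) :
    MeasurableSet {f : ι → ℝ | ∀ t, f t ≤ f s} := by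
  simp only [Set.ofPred_forall]
  exact .iInter fun t => measurableSet_le (measurable_pi_apply t) (measurable_pi_apply s)

theorem integral_comp_eq_sum_measureReal {𝒳 ι : Type*} [MeasurableSpace 𝒳] [Fintype ι]
    [MeasurableSpace ι] [MeasurableSingletonClass ι] {P : Measure 𝒳} [IsFiniteMeasure P]
    {T : 𝒳 → ι} (hT : Measurable T) (h : ι → ℝ) :
    ∫ x, h (T x) ∂P = ∑ t, P.real (T ⁻¹' {t}) * h t := by
  rw [← integral_map hT.aemeasurable (by fun_prop), integral_fintype .of_finite]
  simp [map_measureReal_apply hT (measurableSet_singleton _)]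

section lexArgmax

variable {ι : Type*} [Fintype ι] [LinearOrder ι] [Nonempty ι]

theorem le_lexArgmax (f : ι → ℝ) (t : ι) : f t ≤ f (lexArgmax f) := by
  classical
  have h : lexArgmax f ∈ Finset.univ.filter (fun t => ∀ t', f t' ≤ f t) := Finset.min'_mem _ _
  exact (Finset.mem_filter.mp h).2 t

theorem lexArgmax_le_of_forall_le {f : ι → ℝ} {t : ι} (ht : ∀ t', f t' ≤ f t) :
    lexArgmax f ≤ t := by
  classical
  exact Finset.min'_le _ _ (Finset.mem_filter.mpr ⟨Finset.mem_univ t, ht⟩)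

theorem lexArgmax_eq_iff (f : ι → ℝ) (t : ι) :
    lexArgmax f = t ↔ (∀ t', f t' ≤ f t) ∧ ∀ s < t, ¬ ∀ t', f t' ≤ f s := by
  constructor
  · rintro rfl
    exact ⟨le_lexArgmax f, fun s hs hmax => (lexArgmax_le_of_forall_le hmax).not_gt hs⟩
  · rintro ⟨hmax, hmin⟩
    by_contra hne
    exact hmin _ ((lexArgmax_le_of_forall_le hmax).lt_of_ne hne) (le_lexArgmax f)

theorem lexArgmax_eq_iff_of_ne {f : ι → ℝ} {t : ι} (hties : ∀ s ≠ t, f s ≠ f t) :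
    lexArgmax f = t ↔ ∀ t', f t' ≤ f t := by
  refine ⟨fun h => h ▸ le_lexArgmax f, fun hmax => ?_⟩
  by_contra hne
  exact hties _ hne ((hmax _).antisymm (le_lexArgmax f t))

theorem sup'_univ_eq_lexArgmax (f : ι → ℝ) :
    Finset.univ.sup' Finset.univ_nonempty f = f (lexArgmax f) :=
  (Finset.sup'_le _ _ fun t _ => le_lexArgmax f t).antisymm (Finset.le_sup' f (Finset.mem_univ _))

theorem lexArgmax_preimage_ae_eq {𝒳 : Type*} [MeasurableSpace 𝒳] {P : Measure 𝒳}
    {F : 𝒳 → ι → ℝ} {t : ι} (hties : ∀ s ≠ t, P {x | F x s = F x t} = 0) :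
    (fun x => lexArgmax (F x)) ⁻¹' {t} =ᵐ[P] {x | ∀ t', F x t' ≤ F x t} := by
  have : ∀ᵐ x ∂P, ∀ s ≠ t, F x s ≠ F x t := by
    refine ae_all_iff.mpr fun s => ?_
    by_cases hs : s = t
    · exact .of_forall fun _ h => absurd hs h
    · exact (measure_eq_zero_iff_ae_notMem.mp (hties s hs)).mono fun _ hx _ => hx
  filter_upwards [this] with x hx
  exact propext (lexArgmax_eq_iff_of_ne hx)

theorem measurable_lexArgmax [MeasurableSpace ι] [MeasurableSingletonClass ι] :
    Measurable (lexArgmax : (ι → ℝ) → ι) := by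
  refine measurable_to_countable' fun t => ?_
  have : lexArgmax ⁻¹' {t} =
      {f : ι → ℝ | ∀ t', f t' ≤ f t} ∩ ⋂ s < t, {f : ι → ℝ | ∀ t', f t' ≤ f s}ᶜ := by
    ext f
    simp [lexArgmax_eq_iff]
  rw [this]
  exact (measurableSet_setOf_forall_le t).inter <|
    .iInter fun s => .iInter fun _ => (measurableSet_setOf_forall_le s).compl

end lexArgmax

theorem stmt7_general {𝒳 : Type*} [MeasurableSpace 𝒳] (P : Measure 𝒳) [IsProbabilityMeasure P]
    {m : ℕ} (mt : Fin (m + 1) → 𝒳 → ℝ) (b : Fin (m + 1) → ℝ)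
    (C : ℝ) (hbdd : ∀ t x, |mt t x| ≤ C)
    (hmeas : ∀ t, Measurable (mt t))
    (hatomless : ∀ t t' : Fin (m + 1), t ≠ t' → ∀ z : ℝ, P {x | mt t x - mt t' x = z} = 0)
    (μstar lamstar : Fin (m + 1) → ℝ)
    (hstat : ∀ t, (P {x | ∀ t', t' ≠ t → mt t' x - μstar t' ≤ mt t x - μstar t}).toReal
        + lamstar t = b t)
    (hcs : ∀ t, lamstar t * μstar t = 0) :
    ∫ x, ∑ t, (if lexArgmax (fun t' => mt t' x - μstar t') = t then (1 : ℝ) else 0) * mt t x ∂P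
      = (∫ x, Finset.univ.sup' Finset.univ_nonempty (fun t => mt t x - μstar t) ∂P)
        + ∑ t, μstar t * b t := by
  set T : 𝒳 → Fin (m + 1) := fun x => lexArgmax (fun t => mt t x - μstar t)
  have hT : Measurable T :=
    measurable_lexArgmax.comp (measurable_pi_lambda _ fun t => (hmeas t).sub_const _)
  have hprob (t) : P.real (T ⁻¹' {t}) = b t - lamstar t := by
    rw [measureReal_congr (lexArgmax_preimage_ae_eq fun s hs => by
      simpa [sub_eq_sub_iff_sub_eq_sub] using hatomless s t hs (μstar s - μstar t))]
    have hset : {x | ∀ t', mt t' x - μstar t' ≤ mt t x - μstar t}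
        = {x | ∀ t', t' ≠ t → mt t' x - μstar t' ≤ mt t x - μstar t} := by
      ext x
      exact ⟨fun h t' _ => h t', fun h t' => (eq_or_ne t' t).elim (· ▸ le_rfl) (h t')⟩
    rw [hset, measureReal_def]
    linarith [hstat t]
  have hmT : Integrable (fun x => mt (T x) x) P := by
    refine .of_bound ?_ C (.of_forall fun x => hbdd _ x)
    exact ((measurable_from_prod_countable_left (f := fun p : 𝒳 × Fin (m + 1) => mt p.2 p.1)
      hmeas).comp (measurable_id.prodMk hT)).aestronglyMeasurable
  have hμT : Integrable (fun x => μstar (T x)) P := Integrable.of_finite.comp_measurable hT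
  calc _ = ∫ x, mt (T x) x ∂P := by simp [T]
    _ = (∫ x, (mt (T x) x - μstar (T x)) ∂P) + ∫ x, μstar (T x) ∂P := by
      rw [integral_sub hmT hμT]; ring
    _ = _ := by
      simp only [sup'_univ_eq_lexArgmax, integral_comp_eq_sum_measureReal hT, hprob]
      refine congrArg _ (Finset.sum_congr rfl fun t _ => ?_)
      linear_combination -hcs t

theorem stmt7 {𝒳 : Type*} [MeasurableSpace 𝒳] (P : Measure 𝒳) [IsProbabilityMeasure P]
    {m : ℕ} (mt : Fin (m + 1) → 𝒳 → ℝ) (b : Fin (m + 1) → ℝ) (hb : ∀ t, 0 < b t ∧ b t ≤ 1)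
    (C : ℝ) (hbdd : ∀ t x, |mt t x| ≤ C)
    (hmeas : ∀ t, Measurable (mt t))
    (hatomless : ∀ t t' : Fin (m + 1), t ≠ t' → ∀ z : ℝ, P {x | mt t x - mt t' x = z} = 0)
    (μstar lamstar : Fin (m + 1) → ℝ)
    (hμnn : ∀ t, 0 ≤ μstar t) (hlamnn : ∀ t, 0 ≤ lamstar t)
    (hstat : ∀ t, (P {x | ∀ t', t' ≠ t → mt t' x - μstar t' ≤ mt t x - μstar t}).toReal
        + lamstar t = b t)
    (hcs : ∀ t, lamstar t * μstar t = 0) :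
    ∫ x, ∑ t, (if lexArgmax (fun t' => mt t' x - μstar t') = t then (1 : ℝ) else 0) * mt t x ∂P
      = (∫ x, Finset.univ.sup' Finset.univ_nonempty (fun t => mt t x - μstar t) ∂P)
        + ∑ t, μstar t * b t :=
  stmt7_general P mt b C hbdd hmeas hatomless μstar lamstar hstat hcs
end
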